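/- arXiv:1503.07009 — 2 statements merged into one kernel-verified Lean document; each statement's English description precedes it below -/
import Mathlib

section
/- Let H be a real M×M irreducible W-matrix (H_ij ≥ 0 for i ≠ j, columns summing to zero, and no permutation similarity to a block upper-triangular matrix), and let u∞ be the unique vector with H u∞ = 0, strictly positive entries, and ∑_i (u∞)_i = 1. Then for every initial vector ξ₀ ∈ ℝ^M, the solution exp(tH) ξ₀ of the ODE ξ' = Hξ converges as t → ∞ to the equilibrium (∑_i (ξ₀)_i) · u∞. -/
/-!
Adding a multiple `c` of the identity makes `H` entrywise nonnegative, so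
`exp (t • H) = e^{-ct} exp (t • (H + c))` is entrywise nonnegative for `t ≥ 0`; zero column sums
make it column stochastic. Irreducibility lets every index reach every other one along nonzero
entries, so each entry of some power of `H + c` is positive and `exp H` is strictly positive.
A strictly positive column-stochastic matrix contracts the `ℓ¹` norm on the hyperplane
`∑ v = 0` by some `q < 1`, hence `exp (t • H)` shrinks `ξ₀ - (∑ ξ₀) • uInf` like `q ^ ⌊t⌋`,
while it fixes `uInf`.
-/

open NormedSpace Finset Filter Topology

theorem Fin.exists_perm_mem_iff_lt {M : ℕ} (S : Finset (Fin M)) :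
    ∃ σ : Equiv.Perm (Fin M), ∀ i, σ i ∈ S ↔ (i : ℕ) < #S := by
  have hcard : Fintype.card {i : Fin M // (i : ℕ) < #S} = Fintype.card {i // i ∈ S} := by
    rw [Fintype.card_subtype, Fin.card_filter_val_lt, Fintype.card_coe,
      min_eq_right (by simpa using card_le_univ S)]
  let e := Fintype.equivOfCardEq hcard
  refine ⟨e.extendSubtype, fun i => ⟨fun hi => ?_, e.extendSubtype_mem i⟩⟩
  by_contra hlt
  exact e.extendSubtype_not_mem i hlt hi

namespace Matrix

variable {n : Type*} [Fintype n]

/-- For nonnegative `A` this is strong connectivity of the graph of nonzero entries; unlike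
`Matrix.IsIrreducible` it imposes no sign condition and ignores the diagonal. -/
def IsIndecomposable {R : Type*} [Zero R] (A : Matrix n n R) : Prop :=
  ∀ S : Finset n, S.Nonempty → S ≠ univ → ∃ a ∉ S, ∃ b ∈ S, A a b ≠ 0

theorem isIndecomposable_of_not_exists_perm {R : Type*} [Zero R] {M : ℕ}
    {A : Matrix (Fin M) (Fin M) R}
    (h : ¬ ∃ (m : ℕ) (_ : 0 < m) (_ : m < M) (σ : Equiv.Perm (Fin M)),
        ∀ i j : Fin M, m ≤ (i : ℕ) → (j : ℕ) < m → A (σ i) (σ j) = 0) :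
    A.IsIndecomposable := by
  intro S hne huniv
  by_contra! hclosed
  obtain ⟨σ, hσ⟩ := Fin.exists_perm_mem_iff_lt S
  have hlt : #S < M := by simpa using card_lt_card (ssubset_univ_iff.2 huniv)
  exact h ⟨#S, hne.card_pos, hlt, σ, fun i j hi hj =>
    hclosed _ (mt (hσ i).1 (not_lt.2 hi)) _ ((hσ j).2 hj)⟩

theorem sum_abs_mulVec_le {P : Matrix n n ℝ} {ε : ℝ} (hP : ∀ i j, ε ≤ P i j)
    (hcol : ∀ j, ∑ i, P i j = 1) {v : n → ℝ} (hv : ∑ j, v j = 0) :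
    ∑ i, |(P *ᵥ v) i| ≤ (1 - Fintype.card n * ε) * ∑ j, |v j| := by
  have hrow : ∀ i, |(P *ᵥ v) i| ≤ ∑ j, (P i j - ε) * |v j| := fun i => by
    -- as `∑ v = 0`, lowering every entry of `P` by `ε` does not change `P *ᵥ v`
    have hshift : (P *ᵥ v) i = ∑ j, (P i j - ε) * v j := by
      simp [mulVec, dotProduct, sub_mul, sum_sub_distrib, ← mul_sum, hv]
    rw [hshift]
    refine (abs_sum_le_sum_abs _ _).trans_eq (sum_congr rfl fun j _ => ?_)
    rw [abs_mul, abs_of_nonneg (sub_nonneg.2 (hP i j))]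
  calc ∑ i, |(P *ᵥ v) i| ≤ ∑ i, ∑ j, (P i j - ε) * |v j| := sum_le_sum fun i _ => hrow i
    _ = ∑ j, (∑ i, (P i j - ε)) * |v j| := by rw [sum_comm]; simp only [sum_mul]
    _ = (1 - Fintype.card n * ε) * ∑ j, |v j| := by
      simp [mul_sum, sum_sub_distrib, hcol]

variable [DecidableEq n]

theorem exp_series_hasSum_exp' {𝕂 : Type*} [RCLike 𝕂] (A : Matrix n n 𝕂) :
    HasSum (fun k => (k.factorial⁻¹ : 𝕂) • A ^ k) (exp A) :=
  open scoped Norms.Operator in NormedSpace.exp_series_hasSum_exp' A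

theorem exp_mulVec_of_mulVec_eq_zero {𝕂 : Type*} [RCLike 𝕂] {A : Matrix n n 𝕂} {x : n → 𝕂}
    (hx : A *ᵥ x = 0) : exp A *ᵥ x = x := by
  have hsum := (exp_series_hasSum_exp' A).map (mulVec.addMonoidHomLeft x)
    (continuous_id.matrix_mulVec continuous_const)
  refine hsum.unique ?_
  convert hasSum_single 0 fun k hk => ?_
  · simp [mulVec.addMonoidHomLeft]
  obtain ⟨k, rfl⟩ := Nat.exists_eq_succ_of_ne_zero hk
  simp [mulVec.addMonoidHomLeft, smul_mulVec, pow_succ, ← mulVec_mulVec, hx]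

theorem one_vecMul_exp {𝕂 : Type*} [RCLike 𝕂] {A : Matrix n n 𝕂} (hA : 1 ᵥ* A = 0) :
    1 ᵥ* exp A = 1 := by
  rw [← mulVec_transpose, ← exp_transpose, exp_mulVec_of_mulVec_eq_zero]
  rwa [mulVec_transpose]

theorem exp_add_smul_one (A : Matrix n n ℝ) (c : ℝ) :
    exp (A + c • 1) = Real.exp c • exp A := by
  have hc : exp (c • 1 : Matrix n n ℝ) = Real.exp c • 1 := by
    rw [smul_one_eq_diagonal, exp_diagonal, smul_one_eq_diagonal, Pi.exp_def, Real.exp_eq_exp_ℝ]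
  rw [exp_add_of_commute _ _ ((Commute.one_right A).smul_right c), hc, mul_smul_comm, mul_one]

theorem exp_apply_eq_exp_neg_mul_exp_add_smul_one_apply (A : Matrix n n ℝ) (c : ℝ) (i j : n) :
    exp A i j = Real.exp (-c) * exp (A + c • 1) i j := by
  rw [← smul_eq_mul, ← smul_apply, ← exp_add_smul_one, add_assoc, ← add_smul, add_neg_cancel,
    zero_smul, add_zero]

theorem pow_apply_div_factorial_le_exp_apply {A : Matrix n n ℝ} (hA : ∀ i j, 0 ≤ A i j)
    (k : ℕ) (i j : n) : (A ^ k) i j / k.factorial ≤ exp A i j := by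
  have hsum := Pi.hasSum.1 (Pi.hasSum.1 (exp_series_hasSum_exp' A) i) j
  have := le_hasSum hsum k fun l _ => by
    simpa using mul_nonneg (by positivity) (pow_apply_nonneg hA l i j)
  simpa [div_eq_inv_mul] using this

theorem exists_add_smul_one_nonneg {A : Matrix n n ℝ} (hA : ∀ i j, i ≠ j → 0 ≤ A i j) :
    ∃ c : ℝ, ∀ i j, 0 ≤ (A + c • 1) i j := by
  refine ⟨∑ i, |A i i|, fun i j => ?_⟩
  rcases eq_or_ne i j with rfl | hij
  · have := single_le_sum (fun k _ => abs_nonneg (A k k)) (mem_univ i)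
    simp only [add_apply, smul_apply, one_apply_eq, smul_eq_mul, mul_one]
    linarith [neg_abs_le (A i i)]
  · simpa [one_apply_ne hij] using hA i j hij

theorem exp_apply_nonneg_of_offDiag_nonneg {A : Matrix n n ℝ} (hA : ∀ i j, i ≠ j → 0 ≤ A i j)
    (i j : n) : 0 ≤ exp A i j := by
  obtain ⟨c, hc⟩ := exists_add_smul_one_nonneg hA
  rw [exp_apply_eq_exp_neg_mul_exp_add_smul_one_apply A c]
  exact mul_nonneg (Real.exp_pos _).le <|
    (div_nonneg (pow_apply_nonneg hc 0 i j) (Nat.cast_nonneg _)).trans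
      (pow_apply_div_factorial_le_exp_apply hc 0 i j)

theorem exp_mem_colStochastic {A : Matrix n n ℝ} (hA : ∀ i j, i ≠ j → 0 ≤ A i j)
    (hcol : 1 ᵥ* A = 0) : exp A ∈ colStochastic ℝ n :=
  ⟨exp_apply_nonneg_of_offDiag_nonneg hA, one_vecMul_exp hcol⟩

theorem IsIndecomposable.add_smul_one {R : Type*} [Semiring R] {A : Matrix n n R}
    (hA : A.IsIndecomposable) (c : R) : (A + c • 1).IsIndecomposable := by
  intro S hne huniv
  obtain ⟨a, ha, b, hb, hab⟩ := hA S hne huniv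
  have hne : a ≠ b := fun h => ha (h ▸ hb)
  exact ⟨a, ha, b, hb, by simpa [one_apply_ne hne] using hab⟩

theorem IsIndecomposable.exists_pow_apply_pos {R : Type*} [Semiring R] [LinearOrder R]
    [IsStrictOrderedRing R] {A : Matrix n n R} (hA : A.IsIndecomposable)
    (hnonneg : ∀ i j, 0 ≤ A i j) (i j : n) : ∃ k, 0 < (A ^ k) i j := by
  classical
  let S : Finset n := {a | ∃ k, 0 < (A ^ k) a j}
  have hjS : j ∈ S := mem_filter.2 ⟨mem_univ j, 0, by simp⟩
  suffices hS : S = univ by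
    have hiS : i ∈ S := hS ▸ mem_univ i
    exact (mem_filter.1 hiS).2
  by_contra huniv
  obtain ⟨a, ha, b, hb, hab⟩ := hA S ⟨j, hjS⟩ huniv
  obtain ⟨k, hk⟩ := (mem_filter.1 hb).2
  refine ha (mem_filter.2 ⟨mem_univ a, k + 1, ?_⟩)
  rw [pow_succ', mul_apply]
  exact (mul_pos ((hnonneg a b).lt_of_ne' hab) hk).trans_le <|
    single_le_sum (fun l _ => mul_nonneg (hnonneg a l) (pow_apply_nonneg hnonneg k l j))
      (mem_univ b)

theorem IsIndecomposable.exp_apply_pos {A : Matrix n n ℝ} (hind : A.IsIndecomposable)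
    (hA : ∀ i j, i ≠ j → 0 ≤ A i j) (i j : n) : 0 < exp A i j := by
  obtain ⟨c, hc⟩ := exists_add_smul_one_nonneg hA
  obtain ⟨k, hk⟩ := (hind.add_smul_one c).exists_pow_apply_pos hc i j
  rw [exp_apply_eq_exp_neg_mul_exp_add_smul_one_apply A c]
  exact mul_pos (Real.exp_pos _) <|
    (div_pos hk (Nat.cast_pos.2 k.factorial_pos)).trans_le
      (pow_apply_div_factorial_le_exp_apply hc k i j)

theorem exists_sum_abs_mulVec_le [Nonempty n] {P : Matrix n n ℝ} (hpos : ∀ i j, 0 < P i j)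
    (hP : P ∈ colStochastic ℝ n) :
    ∃ q, 0 ≤ q ∧ q < 1 ∧
      ∀ v : n → ℝ, ∑ j, v j = 0 → ∑ i, |(P *ᵥ v) i| ≤ q * ∑ j, |v j| := by
  obtain ⟨⟨i₀, j₀⟩, hmin⟩ := Finite.exists_min fun p : n × n => P p.1 p.2
  have hcol := (mem_colStochastic_iff_sum.1 hP).2
  refine ⟨1 - Fintype.card n * P i₀ j₀, ?_, ?_, fun v hv =>
    sum_abs_mulVec_le (fun i j => hmin (i, j)) hcol hv⟩
  · have : ∑ _i : n, P i₀ j₀ ≤ ∑ i, P i j₀ := sum_le_sum fun i _ => hmin (i, j₀)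
    simp only [sum_const, card_univ, nsmul_eq_mul, hcol] at this
    linarith
  · have := mul_pos (Nat.cast_pos.2 (Fintype.card_pos (α := n))) (hpos i₀ j₀)
    linarith

theorem sum_abs_pow_mulVec_le {P : Matrix n n ℝ} (hP : P ∈ colStochastic ℝ n) {q : ℝ}
    (hq : 0 ≤ q) (hcontr : ∀ v : n → ℝ, ∑ j, v j = 0 → ∑ i, |(P *ᵥ v) i| ≤ q * ∑ j, |v j|)
    (k : ℕ) {v : n → ℝ} (hv : ∑ j, v j = 0) :
    ∑ i, |(P ^ k *ᵥ v) i| ≤ q ^ k * ∑ j, |v j| := by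
  induction k with
  | zero => simp
  | succ k ih =>
    have hsum : ∑ j, (P ^ k *ᵥ v) j = 0 := by
      rw [sum_mulVec_of_mem_colStochastic (pow_mem hP k), hv]
    calc ∑ i, |(P ^ (k + 1) *ᵥ v) i| = ∑ i, |(P *ᵥ (P ^ k *ᵥ v)) i| := by
          rw [pow_succ', ← mulVec_mulVec]
      _ ≤ q * (q ^ k * ∑ j, |v j|) := (hcontr _ hsum).trans (mul_le_mul_of_nonneg_left ih hq)
      _ = q ^ (k + 1) * ∑ j, |v j| := by ring

theorem tendsto_exp_smul_mulVec_nhds_zero [Nonempty n] {H : Matrix n n ℝ}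
    (hoff : ∀ i j, i ≠ j → 0 ≤ H i j) (hcol : 1 ᵥ* H = 0) (hind : H.IsIndecomposable)
    {v : n → ℝ} (hv : ∑ j, v j = 0) :
    Tendsto (fun t : ℝ => exp (t • H) *ᵥ v) atTop (𝓝 0) := by
  have hstoch : ∀ t : ℝ, 0 ≤ t → exp (t • H) ∈ colStochastic ℝ n := fun t ht =>
    exp_mem_colStochastic (fun i j hij => mul_nonneg ht (hoff i j hij))
      (by rw [vecMul_smul, hcol, smul_zero])
  have hP : exp H ∈ colStochastic ℝ n := by simpa using hstoch 1 zero_le_one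
  obtain ⟨q, hq0, hq1, hcontr⟩ := exists_sum_abs_mulVec_le (hind.exp_apply_pos hoff) hP
  have hbound : ∀ t : ℝ, 0 ≤ t → ‖exp (t • H) *ᵥ v‖ ≤ q ^ ⌊t⌋₊ * ∑ j, |v j| := by
    intro t ht
    set k := ⌊t⌋₊
    -- the first factor is stochastic, hence `ℓ¹`-nonexpansive; each factor `exp H` contracts
    have hsplit : exp (t • H) = exp ((t - k) • H) * exp H ^ k := by
      rw [← exp_nsmul, ← exp_add_of_commute _ _ (((Commute.refl H).smul_left _).smul_right _),
        ← Nat.cast_smul_eq_nsmul ℝ, ← add_smul, sub_add_cancel]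
    have hQ := hstoch (t - k) (sub_nonneg.2 (Nat.floor_le ht))
    have hsum : ∑ j, (exp H ^ k *ᵥ v) j = 0 := by
      rw [sum_mulVec_of_mem_colStochastic (pow_mem hP k), hv]
    have hnonexp := sum_abs_mulVec_le (ε := 0) (fun i j => hQ.1 i j)
      (mem_colStochastic_iff_sum.1 hQ).2 hsum
    rw [hsplit, ← mulVec_mulVec]
    refine (pi_norm_le_iff_of_nonneg (by positivity)).2 fun i => ?_
    calc ‖(exp ((t - k) • H) *ᵥ (exp H ^ k *ᵥ v)) i‖
        ≤ ∑ i, |(exp ((t - k) • H) *ᵥ (exp H ^ k *ᵥ v)) i| :=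
          single_le_sum (f := fun i => |_|) (fun i _ => abs_nonneg _) (mem_univ i)
      _ ≤ ∑ i, |(exp H ^ k *ᵥ v) i| := by simpa using hnonexp
      _ ≤ q ^ k * ∑ j, |v j| := sum_abs_pow_mulVec_le hP hq0 hcontr k hv
  have hlim : Tendsto (fun t : ℝ => q ^ ⌊t⌋₊ * ∑ j, |v j|) atTop (𝓝 0) := by
    simpa using ((tendsto_pow_atTop_nhds_zero_of_lt_one hq0 hq1).comp
      tendsto_nat_floor_atTop).mul_const (∑ j, |v j|)
  exact squeeze_zero_norm' (eventually_ge_atTop 0 |>.mono hbound) hlim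

end Matrix

open Matrix

theorem W_matrix_convergence_to_equilibrium_general
    (M : ℕ) (H : Matrix (Fin M) (Fin M) ℝ)
    (hoffdiag : ∀ i j, i ≠ j → 0 ≤ H i j)
    (hcol : ∀ i, H i i = -∑ k ∈ Finset.univ.erase i, H k i)
    (hirr : ¬ ∃ (m : ℕ) (_ : 0 < m) (_ : m < M) (σ : Equiv.Perm (Fin M)),
        ∀ i j : Fin M, m ≤ (i : ℕ) → (j : ℕ) < m → H (σ i) (σ j) = 0)
    (uInf : Fin M → ℝ)
    (hker : H.mulVec uInf = 0)
    (hmass : ∑ i, uInf i = 1) :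
    ∀ ξ₀ : Fin M → ℝ,
      Filter.Tendsto (fun t : ℝ => (NormedSpace.exp (t • H)).mulVec ξ₀)
        Filter.atTop (nhds ((∑ i, ξ₀ i) • uInf)) := by
  intro ξ₀
  have : Nonempty (Fin M) := by
    by_contra hempty
    simp [not_nonempty_iff.1 hempty] at hmass
  have hcolsum : 1 ᵥ* H = 0 := funext fun j => by
    simp only [vecMul, dotProduct, Pi.one_apply, one_mul, Pi.zero_apply]
    rw [← add_sum_erase _ _ (mem_univ j), hcol j, neg_add_cancel]
  have hv : ∑ i, (ξ₀ - (∑ i, ξ₀ i) • uInf) i = 0 := by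
    simp [sum_sub_distrib, ← mul_sum, hmass]
  have hfixed : ∀ t : ℝ, exp (t • H) *ᵥ uInf = uInf := fun t =>
    exp_mulVec_of_mulVec_eq_zero (by rw [smul_mulVec, hker, smul_zero])
  have hlim := (tendsto_exp_smul_mulVec_nhds_zero hoffdiag hcolsum
    (isIndecomposable_of_not_exists_perm hirr) hv).add_const ((∑ i, ξ₀ i) • uInf)
  simpa [mulVec_sub, mulVec_smul, hfixed] using hlim

/-- **Convergence to equilibrium for an irreducible W-matrix.**
Let `H` be a real `M × M` irreducible W-matrix and `uInf` the unique strictly positive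
kernel vector with unit total mass.  Then for every initial vector `ξ₀`, the solution
`exp(tH) ξ₀` of `ξ' = H ξ` converges as `t → ∞` to `(∑ i, ξ₀ i) • uInf`. -/
theorem W_matrix_convergence_to_equilibrium
    (M : ℕ) (H : Matrix (Fin M) (Fin M) ℝ)
    (hoffdiag : ∀ i j, i ≠ j → 0 ≤ H i j)
    (hcol : ∀ i, H i i = -∑ k ∈ Finset.univ.erase i, H k i)
    (hirr : ¬ ∃ (m : ℕ) (_ : 0 < m) (_ : m < M) (σ : Equiv.Perm (Fin M)),
        ∀ i j : Fin M, m ≤ (i : ℕ) → (j : ℕ) < m → H (σ i) (σ j) = 0)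
    (uInf : Fin M → ℝ)
    (hker : H.mulVec uInf = 0)
    (hpos : ∀ i, 0 < uInf i)
    (hmass : ∑ i, uInf i = 1) :
    ∀ ξ₀ : Fin M → ℝ,
      Filter.Tendsto (fun t : ℝ => (NormedSpace.exp (t • H)).mulVec ξ₀)
        Filter.atTop (nhds ((∑ i, ξ₀ i) • uInf)) :=
  W_matrix_convergence_to_equilibrium_general M H hoffdiag hcol hirr uInf hker hmass
end

section
/- Let T = diag(1/τ_1, …, 1/τ_N) with τ_i > 0, let μ ∈ ℝ^N with μ_i ≥ 0 and ∑_i μ_i = 1, let A = (μ e^T − I) T, and let k > 0. Then for every initial vector ξ₀ ∈ ℝ^N, exp(t(A − kT)) ξ₀ → 0 as t → ∞. -/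
/-!
The generator `M = A - kT` has nonnegative off-diagonal entries and column sums
`-k/τⱼ ≤ -β` with `β = k / ∑ τ > 0`. Adding `c • 1` with `c ≥ max |Mᵢᵢ|` makes it entrywise
nonnegative, so the ∞-operator norm of `t (M + c • 1)ᵀ` is at most `t (c - β)`. Hence
`‖exp (t Mᵀ)‖ = e^{-tc} ‖exp (t (M + c • 1)ᵀ)‖ ≤ e^{-tc} e^{t (c - β)} = e^{-βt} → 0`.
-/

open Matrix Filter NormedSpace Topology Finset

section NormedAlgebra

variable {𝔸 : Type*} [NormedRing 𝔸] [NormedAlgebra ℝ 𝔸] [CompleteSpace 𝔸]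

theorem norm_exp_le_exp_norm [NormOneClass 𝔸] (x : 𝔸) : ‖exp x‖ ≤ Real.exp ‖x‖ := by
  rw [Real.exp_eq_exp_ℝ]
  refine (exp_series_hasSum_exp' (𝕂 := ℝ) x).norm_le_of_bounded
    (expSeries_div_hasSum_exp ‖x‖) fun n => ?_
  rw [norm_smul, div_eq_inv_mul, norm_inv, Real.norm_natCast]
  gcongr
  exact norm_pow_le x n

theorem exp_add_smul_one (x : 𝔸) (r : ℝ) : exp (x + r • 1) = Real.exp r • exp x := by
  -- `exp_add_of_commute` is stated for normed `ℚ`-algebras.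
  let +nondep : NormedAlgebra ℚ 𝔸 := .restrictScalars ℚ ℝ 𝔸
  rw [← Algebra.algebraMap_eq_smul_one, exp_add_of_commute (Algebra.commutes r x).symm,
    ← algebraMap_exp_comm, Real.exp_eq_exp_ℝ, ← Algebra.commutes, Algebra.smul_def]

end NormedAlgebra

namespace Matrix

variable {m n : Type*} [Fintype m] [Fintype n]

open scoped Norms.Operator in
theorem linfty_opNorm_le_of_nonneg {B : Matrix m n ℝ} {s : ℝ} (hs : 0 ≤ s)
    (hB : ∀ i j, 0 ≤ B i j) (hrow : ∀ i, ∑ j, B i j ≤ s) : ‖B‖ ≤ s := by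
  change ‖fun i => WithLp.toLp 1 (B i)‖ ≤ s
  refine (pi_norm_le_iff_of_nonneg hs).2 fun i => ?_
  rw [PiLp.norm_eq_of_L1]
  simpa [abs_of_nonneg (hB i _)] using hrow i

open scoped Norms.Operator in
theorem norm_exp_smul_le_of_offDiag_nonneg [DecidableEq n] [Nonempty n] {Q : Matrix n n ℝ}
    {β : ℝ} (hQ : ∀ i j, i ≠ j → 0 ≤ Q i j) (hrow : ∀ i, ∑ j, Q i j ≤ -β) {t : ℝ}
    (ht : 0 ≤ t) : ‖exp (t • Q)‖ ≤ Real.exp (-(β * t)) := by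
  set c := ∑ i, |Q i i|
  set B := Q + c • 1
  have hB : ∀ i j, 0 ≤ B i j := by
    intro i j
    rcases eq_or_ne i j with rfl | hij
    · have : |Q i i| ≤ c := single_le_sum (fun j _ => abs_nonneg (Q j j)) (mem_univ i)
      simp only [B, add_apply, smul_apply, one_apply_eq, smul_eq_mul, mul_one]
      linarith [neg_abs_le (Q i i)]
    · simpa [B, hij] using hQ i j hij
  have hBrow : ∀ i, ∑ j, B i j ≤ c - β := by
    intro i
    simp only [B, add_apply, smul_apply, one_apply, smul_eq_mul, mul_ite, mul_one, mul_zero,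
      sum_add_distrib, sum_ite_eq, mem_univ, if_true]
    linarith [hrow i]
  have hβc : 0 ≤ c - β := by
    obtain ⟨i⟩ := ‹Nonempty n›
    exact (sum_nonneg fun j _ => hB i j).trans (hBrow i)
  have hexp : exp (t • Q) = Real.exp (-(t * c)) • exp (t • B) := by
    rw [show t • Q = t • B + (-(t * c)) • 1 by simp only [B]; module]
    exact exp_add_smul_one _ _
  calc ‖exp (t • Q)‖ = Real.exp (-(t * c)) * ‖exp (t • B)‖ := by
        rw [hexp, norm_smul, Real.norm_of_nonneg (Real.exp_pos _).le]
    _ ≤ Real.exp (-(t * c)) * Real.exp (t * (c - β)) := by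
        gcongr
        refine (norm_exp_le_exp_norm _).trans (Real.exp_le_exp.2 ?_)
        rw [norm_smul, Real.norm_of_nonneg ht]
        exact mul_le_mul_of_nonneg_left (linfty_opNorm_le_of_nonneg hβc hB hBrow) ht
    _ = Real.exp (-(β * t)) := by rw [← Real.exp_add]; ring_nf

theorem tendsto_exp_smul_atTop_zero_of_offDiag_nonneg [DecidableEq n] {Q : Matrix n n ℝ}
    {β : ℝ} (hβ : 0 < β) (hQ : ∀ i j, i ≠ j → 0 ≤ Q i j) (hcol : ∀ j, ∑ i, Q i j ≤ -β) :
    Tendsto (fun t : ℝ => exp (t • Q)) atTop (𝓝 0) := by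
  cases isEmpty_or_nonempty n
  · exact tendsto_const_nhds.congr fun _ => Subsingleton.elim _ _
  have hT : Tendsto (fun t : ℝ => exp (t • Qᵀ)) atTop (𝓝 0) := by
    -- The ∞-operator norm induces the product topology on matrices definitionally.
    open scoped Norms.Operator in
    refine squeeze_zero_norm' (a := fun t => Real.exp (-(β * t))) ?_ ?_
    · filter_upwards [eventually_ge_atTop 0] with t ht
      exact norm_exp_smul_le_of_offDiag_nonneg (fun i j hij => hQ j i hij.symm) hcol ht
    · exact Real.tendsto_exp_neg_atTop_nhds_zero.comp (tendsto_id.const_mul_atTop hβ)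
  simpa [Function.comp_def, ← exp_transpose] using
    (continuous_id.matrix_transpose.tendsto 0).comp hT

end Matrix

section AnnihilationModel

variable {n : Type*} [Fintype n] [DecidableEq n]

/-- The generator `A - kT` of the mean total amounts, with `A = (μ eᵀ - I) T`. -/
noncomputable def annihilationGenerator (τ μ : n → ℝ) (k : ℝ) : Matrix n n ℝ :=
  (vecMulVec μ (fun _ => 1) - 1) * diagonal (fun i => (τ i)⁻¹) - k • diagonal fun i => (τ i)⁻¹

theorem annihilationGenerator_apply (τ μ : n → ℝ) (k : ℝ) (i j : n) :
    annihilationGenerator τ μ k i j = (μ i - if i = j then 1 + k else 0) * (τ j)⁻¹ := by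
  simp only [annihilationGenerator, Matrix.sub_apply, mul_diagonal, Matrix.smul_apply,
    diagonal_apply, vecMulVec_apply, one_apply, smul_eq_mul]
  split_ifs with h
  · subst h; ring
  · ring

theorem annihilationGenerator_nonneg_of_ne {τ μ : n → ℝ} (hτ : ∀ i, 0 < τ i)
    (hμ0 : ∀ i, 0 ≤ μ i) (k : ℝ) {i j : n} (hij : i ≠ j) :
    0 ≤ annihilationGenerator τ μ k i j := by
  simpa [annihilationGenerator_apply, hij] using mul_nonneg (hμ0 i) (inv_pos.2 (hτ j)).le

theorem sum_annihilationGenerator_apply (τ : n → ℝ) {μ : n → ℝ} (hμ : ∑ i, μ i = 1) (k : ℝ)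
    (j : n) : ∑ i, annihilationGenerator τ μ k i j = -(k / τ j) := by
  simp only [annihilationGenerator_apply, ← sum_mul, sum_sub_distrib, hμ, sum_ite_eq',
    mem_univ, if_true]
  ring

end AnnihilationModel

/-- **Decay to zero for the internal-states annihilation model I.**
With `T = diag (1/τᵢ)`, `τᵢ > 0`, `μᵢ ≥ 0`, `∑ μᵢ = 1`, `A = (μ eᵀ - I) T` and `k > 0`,
for every initial vector `ξ₀` we have `exp (t (A - k T)) ξ₀ → 0` as `t → ∞`. -/
theorem annihilation_modelI_decay_to_zero
    (N : ℕ) (τ : Fin N → ℝ) (hτ : ∀ i, 0 < τ i)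
    (μ : Fin N → ℝ) (hμ0 : ∀ i, 0 ≤ μ i) (hμ : ∑ i, μ i = 1)
    (k : ℝ) (hk : 0 < k) :
    ∀ ξ₀ : Fin N → ℝ,
      Filter.Tendsto
        (fun t : ℝ =>
          (NormedSpace.exp
            (t • ((Matrix.vecMulVec μ (fun _ => (1 : ℝ)) - 1) *
                Matrix.diagonal (fun i => (τ i)⁻¹) -
              k • Matrix.diagonal fun i => (τ i)⁻¹))).mulVec ξ₀)
        Filter.atTop (nhds 0) := by
  intro ξ₀
  cases isEmpty_or_nonempty (Fin N)
  · exact tendsto_const_nhds.congr fun _ => Subsingleton.elim _ _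
  have hβ : 0 < k / ∑ i, τ i := div_pos hk (sum_pos (fun i _ => hτ i) univ_nonempty)
  have hcol : ∀ j, ∑ i, annihilationGenerator τ μ k i j ≤ -(k / ∑ i, τ i) := fun j => by
    rw [sum_annihilationGenerator_apply τ hμ]
    exact neg_le_neg (div_le_div_of_nonneg_left hk.le (hτ j)
      (single_le_sum (fun i _ => (hτ i).le) (mem_univ j)))
  have hdecay := tendsto_exp_smul_atTop_zero_of_offDiag_nonneg hβ
    (fun i j => annihilationGenerator_nonneg_of_ne hτ hμ0 k) hcol
  simpa only [annihilationGenerator, Function.comp_def, id, zero_mulVec] using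
    ((continuous_id.matrix_mulVec (continuous_const (y := ξ₀))).tendsto 0).comp hdecay
end
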